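/- arXiv:1606.05480 — 2 statements merged into one kernel-verified Lean document; each statement's English description precedes it below -/
import Mathlib

section
/- Let (G,σ) and (H,σ') be finite simple graphs with linear orders on their vertex sets, and set p = FF(G,σ) and q = FF(H,σ'). Then FF(G□H, lex) = FF(K_p□K_q, lex), where G□H carries the lexicographic order induced by σ and σ', and K_p□K_q carries the lexicographic order induced by the natural orders 1,…,p and 1,…,q on the vertices of K_p and K_q. -/
open SimpleGraph

/-- First-Fit (greedy) coloring of `G` with respect to the vertex ordering given by the
injective position function `ord` (vertex `u` comes before `v` iff `ord u < ord v`).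
Each vertex receives the smallest positive integer not used on earlier neighbors. -/
noncomputable def firstFit {V : Type*} (G : SimpleGraph V) (ord : V → ℕ) : V → ℕ :=
  (InvImage.wf ord Nat.lt_wfRel.wf).fix
    (fun v ih => sInf {c : ℕ | 1 ≤ c ∧ ∀ u, ∀ h : ord u < ord v, G.Adj u v → ih u h ≠ c})

/-- `FFColors G ord` is the number of colors used by the First-Fit coloring. -/
noncomputable def FFColors {V : Type*} [Fintype V] (G : SimpleGraph V) (ord : V → ℕ) : ℕ :=
  (Finset.univ.image (firstFit G ord)).card

open Classical in
/-- First-Fit coloring of `(G, ord)` subject to the pre-coloring `C₀` on the set `S`: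
vertices of `S` keep their pre-assigned colors and are skipped by the scan; every other
vertex receives the smallest positive integer not already assigned (or pre-assigned)
to a neighbor. -/
noncomputable def firstFitWith {V : Type*} (G : SimpleGraph V) (ord : V → ℕ)
    (S : Set V) (C₀ : V → ℕ) : V → ℕ :=
  (InvImage.wf ord Nat.lt_wfRel.wf).fix
    (fun v ih =>
      if v ∈ S then C₀ v
      else sInf {c : ℕ | 1 ≤ c ∧ (∀ u, G.Adj u v → u ∈ S → C₀ u ≠ c) ∧
        ∀ u, ∀ h : ord u < ord v, G.Adj u v → u ∉ S → ih u h ≠ c})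

/-- Position function of the lexicographic order on `V × W` induced by the position
functions `σ` on `V` and `σ'` on `W` (for injective `σ, σ'`: `(u,v)` comes before
`(u',v')` iff `σ u < σ u'`, or `u = u'` and `σ' v < σ' v'`). -/
noncomputable def lexPos {V W : Type*} [Fintype W] (σ : V → ℕ) (σ' : W → ℕ) : V × W → ℕ :=
  fun p => σ p.1 * (Finset.univ.sup σ' + 1) + σ' p.2

/-- A proper coloring with colors in the positive integers. -/
def IsProperColoring {V : Type*} (G : SimpleGraph V) (C : V → ℕ) : Prop :=
  (∀ v, 1 ≤ C v) ∧ ∀ ⦃u v⦄, G.Adj u v → C u ≠ C v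

/-- `D` is a `(C, ord)`-descent: `D = {v} ∪ N` where `C v = y`, `x < y` is a (positive)
color, `N` is the set of neighbors of `v` of color `x`, and every `u ∈ N` comes after
`v` in the order. -/
def IsDescent {V : Type*} (G : SimpleGraph V) (ord : V → ℕ) (C : V → ℕ) (D : Set V) : Prop :=
  ∃ v x, 1 ≤ x ∧ x < C v ∧
    (∀ u, G.Adj u v → C u = x → ord v < ord u) ∧
    D = insert v {u | G.Adj u v ∧ C u = x}

/-- The Grundy number: the maximum of `FFColors G ord` over all vertex orderings. -/
noncomputable def grundy {V : Type*} [Fintype V] (G : SimpleGraph V) : ℕ :=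
  sSup {n | ∃ ord : V → ℕ, Function.Injective ord ∧ FFColors G ord = n}

/-- The independence number of `G`. -/
noncomputable def indepNum {V : Type*} [Fintype V] (G : SimpleGraph V) : ℕ :=
  sSup {n | ∃ s : Finset V, (∀ u ∈ s, ∀ v ∈ s, ¬ G.Adj u v) ∧ s.card = n}

/-- An `m × n` Latin rectangle: entries in `{1, …, n}`, no repeats in rows or columns. -/
def IsLatinRectangle {m n : ℕ} (R : Fin m → Fin n → ℕ) : Prop :=
  (∀ i j, R i j ∈ Finset.Icc 1 n) ∧ (∀ i, Function.Injective (R i)) ∧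
    (∀ j, Function.Injective (fun i => R i j))

/-- `S` is a greedy defining set of the rectangle `R` (cells scanned in lexicographic,
i.e. row-by-row, order): the greedy completion, which skips the cells of `S` (fixed to
their values in `R`) and places in each other cell the smallest positive integer not yet
appearing in its row or column, reproduces `R`.  This is First-Fit on the rook's graph
`K_m □ K_n` subject to the pre-coloring of `S` by `R`. -/
noncomputable def IsRectGDS {m n : ℕ} (R : Fin m → Fin n → ℕ) (S : Set (Fin m × Fin n)) : Prop :=
  firstFitWith ((⊤ : SimpleGraph (Fin m)).boxProd (⊤ : SimpleGraph (Fin n)))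
    (lexPos Fin.val Fin.val) S (fun p => R p.1 p.2) = fun p => R p.1 p.2

/-- The Latin square `L_k` of order `2^k`: the entry in row `i`, column `j` is
`2^k - (i XOR j)`; equivalently the `k`-fold tensor product of `[[2,1],[1,2]]`. -/
def Lsquare (k : ℕ) : Fin (2 ^ k) → Fin (2 ^ k) → ℕ :=
  fun i j => 2 ^ k - (i.val ^^^ j.val)

section FFaux
set_option linter.unusedSectionVars false

lemma firstFit_eq {V : Type*} (G : SimpleGraph V) (ord : V → ℕ) (v : V) :
    firstFit G ord v =
      sInf {c : ℕ | 1 ≤ c ∧ ∀ u, ord u < ord v → G.Adj u v → firstFit G ord u ≠ c} := by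
  conv_lhs => rw [firstFit, WellFounded.fix_eq]
  rfl

variable {V : Type*} [Fintype V] (G : SimpleGraph V) (ord : V → ℕ)

lemma firstFit_setNonempty (v : V) :
    {c : ℕ | 1 ≤ c ∧ ∀ u, ord u < ord v → G.Adj u v → firstFit G ord u ≠ c}.Nonempty := by
  refine ⟨Finset.univ.sup (firstFit G ord) + 1, Nat.le_add_left 1 _, fun u _ _ hne => ?_⟩
  have := Finset.le_sup (f := firstFit G ord) (Finset.mem_univ u)
  omega

lemma firstFit_spec (v : V) :
    1 ≤ firstFit G ord v ∧
      ∀ u, ord u < ord v → G.Adj u v → firstFit G ord u ≠ firstFit G ord v := by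
  have h := Nat.sInf_mem (firstFit_setNonempty G ord v)
  rw [← firstFit_eq] at h
  exact h

lemma firstFit_lt (v : V) (c : ℕ) (h1 : 1 ≤ c) (h2 : c < firstFit G ord v) :
    ∃ u, ord u < ord v ∧ G.Adj u v ∧ firstFit G ord u = c := by
  by_contra hcon
  push_neg at hcon
  have hc : c ∈ {c : ℕ | 1 ≤ c ∧ ∀ u, ord u < ord v → G.Adj u v → firstFit G ord u ≠ c} :=
    ⟨h1, fun u hu ha => hcon u hu ha⟩
  have := Nat.sInf_le hc
  rw [← firstFit_eq] at this
  omega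

lemma firstFit_proper (hinj : Function.Injective ord) {u v : V} (h : G.Adj u v) :
    firstFit G ord u ≠ firstFit G ord v := by
  rcases lt_trichotomy (ord u) (ord v) with h1 | h1 | h1
  · exact (firstFit_spec G ord v).2 u h1 h
  · exact absurd (hinj h1) h.ne
  · exact fun he => (firstFit_spec G ord u).2 v h1 h.symm he.symm

lemma firstFit_image :
    Finset.univ.image (firstFit G ord) = Finset.Icc 1 (FFColors G ord) := by
  rcases isEmpty_or_nonempty V with hV | hV
  · simp [FFColors, Finset.univ_eq_empty]
  · set I := Finset.univ.image (firstFit G ord) with hI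
    have hne : I.Nonempty := (Finset.univ_nonempty).image _
    set m := I.max' hne with hm
    have hIm : I = Finset.Icc 1 m := by
      ext b
      simp only [Finset.mem_Icc]
      constructor
      · rintro hb
        refine ⟨?_, Finset.le_max' I b hb⟩
        obtain ⟨w, -, rfl⟩ := Finset.mem_image.1 hb
        exact (firstFit_spec G ord w).1
      · rintro ⟨hb1, hb2⟩
        obtain ⟨w, -, hw⟩ := Finset.mem_image.1 (I.max'_mem hne)
        rcases eq_or_lt_of_le hb2 with rfl | hlt
        · exact I.max'_mem hne
        · obtain ⟨u, -, -, hu⟩ := firstFit_lt G ord w b hb1 (by omega)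
          exact Finset.mem_image.2 ⟨u, Finset.mem_univ u, hu⟩
    have hcard : FFColors G ord = m := by
      rw [FFColors, ← hI, hIm, Nat.card_Icc]; omega
    rw [hIm, hcard]

lemma lexlt {M a a' b b' : ℕ} (hb : b < M) (hb' : b' < M) :
    a * M + b < a' * M + b' ↔ a < a' ∨ (a = a' ∧ b < b') := by
  constructor
  · intro h
    rcases lt_trichotomy a a' with h1 | h1 | h1
    · exact Or.inl h1
    · subst h1; exact Or.inr ⟨rfl, by omega⟩
    · exfalso
      have : a' * M + b' < a * M + b := by
        calc a' * M + b' < a' * M + M := by omega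
          _ = (a' + 1) * M := by ring
          _ ≤ a * M := Nat.mul_le_mul_right M h1
          _ ≤ a * M + b := Nat.le_add_right _ _
      omega
  · rintro (h | ⟨rfl, h⟩)
    · calc a * M + b < a * M + M := by omega
        _ = (a + 1) * M := by ring
        _ ≤ a' * M := Nat.mul_le_mul_right M h
        _ ≤ a' * M + b' := Nat.le_add_right _ _
    · omega

lemma lexPos_lt {V' W : Type*} [Fintype W] (σ : V' → ℕ) (σ' : W → ℕ) (u u' : V') (v v' : W) :
    lexPos σ σ' (u, v) < lexPos σ σ' (u', v') ↔
      σ u < σ u' ∨ (σ u = σ u' ∧ σ' v < σ' v') :=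
  lexlt (Nat.lt_succ_of_le (Finset.le_sup (Finset.mem_univ v)))
    (Nat.lt_succ_of_le (Finset.le_sup (Finset.mem_univ v')))

lemma lexPos_inj {V' W : Type*} [Fintype W] {σ : V' → ℕ} {σ' : W → ℕ}
    (hσ : Function.Injective σ) (hσ' : Function.Injective σ') :
    Function.Injective (lexPos σ σ') := by
  rintro ⟨u, v⟩ ⟨u', v'⟩ h
  have h1 := lexPos_lt σ σ' u u' v v'
  have h2 := lexPos_lt σ σ' u' u v' v
  have hu : σ u = σ u' := by
    rcases lt_trichotomy (σ u) (σ u') with hc | hc | hc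
    · exact absurd (h1.2 (Or.inl hc)) (by omega)
    · exact hc
    · exact absurd (h2.2 (Or.inl hc)) (by omega)
  have hv : σ' v = σ' v' := by
    rcases lt_trichotomy (σ' v) (σ' v') with hc | hc | hc
    · exact absurd (h1.2 (Or.inr ⟨hu, hc⟩)) (by omega)
    · exact hc
    · exact absurd (h2.2 (Or.inr ⟨hu.symm, hc⟩)) (by omega)
  exact Prod.ext (hσ hu) (hσ' hv)

end FFaux

/-- With `p = FF(G,σ)` and `q = FF(H,σ')`,
`FF(G □ H, lex) = FF(K_p □ K_q, lex)`, where `K_p □ K_q` carries the lexicographic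
order induced by the natural orders on the vertices of the complete factors. -/
theorem FF_boxProd_lex_eq_complete {V W : Type*} [Fintype V] [Fintype W]
    (G : SimpleGraph V) (H : SimpleGraph W)
    (σ : V → ℕ) (σ' : W → ℕ) (hσ : Function.Injective σ) (hσ' : Function.Injective σ')
    (p q : ℕ) (hp : FFColors G σ = p) (hq : FFColors H σ' = q) :
    FFColors (G.boxProd H) (lexPos σ σ') =
      FFColors ((⊤ : SimpleGraph (Fin p)).boxProd (⊤ : SimpleGraph (Fin q)))
        (lexPos Fin.val Fin.val) := by

  classical
  subst hp hq
  set p := FFColors G σ with hpdef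
  set q := FFColors H σ' with hqdef
  have himc : Finset.univ.image (firstFit G σ) = Finset.Icc 1 p := firstFit_image G σ
  have himc' : Finset.univ.image (firstFit H σ') = Finset.Icc 1 q := firstFit_image H σ'
  have hcmem : ∀ u : V, 1 ≤ firstFit G σ u ∧ firstFit G σ u ≤ p := by
    intro u
    have : firstFit G σ u ∈ Finset.Icc 1 p :=
      himc ▸ Finset.mem_image_of_mem (firstFit G σ) (Finset.mem_univ u)
    simpa [Finset.mem_Icc] using this
  have hcmem' : ∀ v : W, 1 ≤ firstFit H σ' v ∧ firstFit H σ' v ≤ q := by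
    intro v
    have : firstFit H σ' v ∈ Finset.Icc 1 q :=
      himc' ▸ Finset.mem_image_of_mem (firstFit H σ') (Finset.mem_univ v)
    simpa [Finset.mem_Icc] using this
  have hcb : ∀ u : V, firstFit G σ u - 1 < p := fun u => by have := hcmem u; omega
  have hcb' : ∀ v : W, firstFit H σ' v - 1 < q := fun v => by have := hcmem' v; omega
  set K := ((⊤ : SimpleGraph (Fin p)).boxProd (⊤ : SimpleGraph (Fin q))) with hKdef
  set FK := firstFit K (lexPos Fin.val Fin.val) with hFKdef
  set F := firstFit (G.boxProd H) (lexPos σ σ') with hFdef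
  have hFKproper : ∀ {x y : Fin p × Fin q}, K.Adj x y → FK x ≠ FK y := fun hxy =>
    firstFit_proper K (lexPos Fin.val Fin.val)
      (lexPos_inj Fin.val_injective Fin.val_injective) hxy
  have key : ∀ n, ∀ uv : V × W, lexPos σ σ' uv = n →
      F uv = FK (⟨firstFit G σ uv.1 - 1, hcb uv.1⟩, ⟨firstFit H σ' uv.2 - 1, hcb' uv.2⟩) := by
    intro n
    induction n using Nat.strong_induction_on with
    | _ n ih =>
      rintro ⟨u, v⟩ rfl
      show F (u, v) = FK (⟨firstFit G σ u - 1, hcb u⟩, ⟨firstFit H σ' v - 1, hcb' v⟩)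
      have hle1 : F (u, v) ≤
          FK (⟨firstFit G σ u - 1, hcb u⟩, ⟨firstFit H σ' v - 1, hcb' v⟩) := by
        by_contra hcon
        push_neg at hcon
        have hpos : 1 ≤ FK (⟨firstFit G σ u - 1, hcb u⟩, ⟨firstFit H σ' v - 1, hcb' v⟩) :=
          (firstFit_spec K (lexPos Fin.val Fin.val) _).1
        obtain ⟨⟨u₀, v₀⟩, hlt, hadj, heq⟩ :=
          firstFit_lt (G.boxProd H) (lexPos σ σ') (u, v)
            (FK (⟨firstFit G σ u - 1, hcb u⟩, ⟨firstFit H σ' v - 1, hcb' v⟩)) hpos hcon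
        have hIH : F (u₀, v₀) =
            FK (⟨firstFit G σ u₀ - 1, hcb u₀⟩, ⟨firstFit H σ' v₀ - 1, hcb' v₀⟩) :=
          ih _ hlt (u₀, v₀) rfl
        have heq' : F (u₀, v₀) =
            FK (⟨firstFit G σ u - 1, hcb u⟩, ⟨firstFit H σ' v - 1, hcb' v⟩) := heq
        rcases boxProd_adj.1 hadj with ⟨hGa, h2⟩ | ⟨hHa, h2⟩
        · have hv0 : v = v₀ := h2.symm
          subst hv0
          have hGa' : G.Adj u₀ u := hGa
          have hne : firstFit G σ u₀ ≠ firstFit G σ u := firstFit_proper G σ hσ hGa'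
          have hadjK : K.Adj (⟨firstFit G σ u₀ - 1, hcb u₀⟩, ⟨firstFit H σ' v - 1, hcb' v⟩)
              (⟨firstFit G σ u - 1, hcb u⟩, ⟨firstFit H σ' v - 1, hcb' v⟩) := by
            refine boxProd_adj.2 (Or.inl ⟨(top_adj _ _).2 (Fin.ne_of_val_ne ?_), rfl⟩)
            show firstFit G σ u₀ - 1 ≠ firstFit G σ u - 1
            have h1 := hcmem u₀; have h2 := hcmem u
            omega
          exact hFKproper hadjK (hIH.symm.trans heq')
        · have hu0 : u = u₀ := h2.symm
          subst hu0
          have hHa' : H.Adj v₀ v := hHa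
          have hne : firstFit H σ' v₀ ≠ firstFit H σ' v := firstFit_proper H σ' hσ' hHa'
          have hadjK : K.Adj (⟨firstFit G σ u - 1, hcb u⟩, ⟨firstFit H σ' v₀ - 1, hcb' v₀⟩)
              (⟨firstFit G σ u - 1, hcb u⟩, ⟨firstFit H σ' v - 1, hcb' v⟩) := by
            refine boxProd_adj.2 (Or.inr ⟨(top_adj _ _).2 (Fin.ne_of_val_ne ?_), rfl⟩)
            show firstFit H σ' v₀ - 1 ≠ firstFit H σ' v - 1
            have h1 := hcmem' v₀; have h2 := hcmem' v
            omega
          exact hFKproper hadjK (hIH.symm.trans heq')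
      have hle2 : FK (⟨firstFit G σ u - 1, hcb u⟩, ⟨firstFit H σ' v - 1, hcb' v⟩) ≤
          F (u, v) := by
        by_contra hcon
        push_neg at hcon
        have hpos : 1 ≤ F (u, v) := (firstFit_spec (G.boxProd H) (lexPos σ σ') (u, v)).1
        obtain ⟨⟨i', j'⟩, hlt, hadj, heq⟩ :=
          firstFit_lt K (lexPos Fin.val Fin.val)
            (⟨firstFit G σ u - 1, hcb u⟩, ⟨firstFit H σ' v - 1, hcb' v⟩) (F (u, v)) hpos hcon
        have heq' : FK (i', j') = F (u, v) := heq
        have hlt' : (i' : ℕ) < firstFit G σ u - 1 ∨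
            ((i' : ℕ) = firstFit G σ u - 1 ∧ (j' : ℕ) < firstFit H σ' v - 1) :=
          (lexPos_lt Fin.val Fin.val i' ⟨firstFit G σ u - 1, hcb u⟩ j'
            ⟨firstFit H σ' v - 1, hcb' v⟩).1 hlt
        rcases boxProd_adj.1 hadj with ⟨hne, h2⟩ | ⟨hne, h2⟩
        · have hj' : (⟨firstFit H σ' v - 1, hcb' v⟩ : Fin q) = j' := h2.symm
          subst hj'
          have hne' : i' ≠ ⟨firstFit G σ u - 1, hcb u⟩ := (top_adj _ _).1 hne
          have hival : (i' : ℕ) < firstFit G σ u - 1 := by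
            rcases hlt' with h | ⟨h, h'⟩
            · exact h
            · exact absurd (Fin.ext h) hne'
          have hcu := hcmem u
          obtain ⟨u₀, hult, huadj, hueq⟩ :=
            firstFit_lt G σ u ((i' : ℕ) + 1) (by omega) (by omega)
          have hwadj : (G.boxProd H).Adj (u₀, v) (u, v) := boxProd_adj.2 (Or.inl ⟨huadj, rfl⟩)
          have hwlt : lexPos σ σ' (u₀, v) < lexPos σ σ' (u, v) :=
            (lexPos_lt σ σ' u₀ u v v).2 (Or.inl hult)
          have hIH : F (u₀, v) =
              FK (⟨firstFit G σ u₀ - 1, hcb u₀⟩, ⟨firstFit H σ' v - 1, hcb' v⟩) :=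
            ih _ hwlt (u₀, v) rfl
          have hcell : (⟨firstFit G σ u₀ - 1, hcb u₀⟩ : Fin p) = i' :=
            Fin.ext (show firstFit G σ u₀ - 1 = (i' : ℕ) by omega)
          rw [hcell] at hIH
          exact (firstFit_spec (G.boxProd H) (lexPos σ σ') (u, v)).2 (u₀, v) hwlt hwadj
            (hIH.trans heq')
        · have hi' : (⟨firstFit G σ u - 1, hcb u⟩ : Fin p) = i' := h2.symm
          subst hi'
          have hne' : j' ≠ ⟨firstFit H σ' v - 1, hcb' v⟩ := (top_adj _ _).1 hne
          have hjval : (j' : ℕ) < firstFit H σ' v - 1 := by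
            rcases hlt' with h | ⟨h, h'⟩
            · exact absurd h (lt_irrefl _)
            · exact h'
          have hcv := hcmem' v
          obtain ⟨v₀, hvlt, hvadj, hveq⟩ :=
            firstFit_lt H σ' v ((j' : ℕ) + 1) (by omega) (by omega)
          have hwadj : (G.boxProd H).Adj (u, v₀) (u, v) := boxProd_adj.2 (Or.inr ⟨hvadj, rfl⟩)
          have hwlt : lexPos σ σ' (u, v₀) < lexPos σ σ' (u, v) :=
            (lexPos_lt σ σ' u u v₀ v).2 (Or.inr ⟨rfl, hvlt⟩)
          have hIH : F (u, v₀) =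
              FK (⟨firstFit G σ u - 1, hcb u⟩, ⟨firstFit H σ' v₀ - 1, hcb' v₀⟩) :=
            ih _ hwlt (u, v₀) rfl
          have hcell : (⟨firstFit H σ' v₀ - 1, hcb' v₀⟩ : Fin q) = j' :=
            Fin.ext (show firstFit H σ' v₀ - 1 = (j' : ℕ) by omega)
          rw [hcell] at hIH
          exact (firstFit_spec (G.boxProd H) (lexPos σ σ') (u, v)).2 (u, v₀) hwlt hwadj
            (hIH.trans heq')
      exact le_antisymm hle1 hle2
  show (Finset.univ.image F).card = (Finset.univ.image FK).card
  congr 1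
  ext a
  simp only [Finset.mem_image, Finset.mem_univ, true_and]
  constructor
  · rintro ⟨uv, rfl⟩
    exact ⟨_, (key _ uv rfl).symm⟩
  · rintro ⟨⟨i, j⟩, rfl⟩
    have hi : (i : ℕ) + 1 ∈ Finset.Icc 1 p := by
      simp only [Finset.mem_Icc]
      exact ⟨by omega, by have := i.isLt; omega⟩
    have hj : (j : ℕ) + 1 ∈ Finset.Icc 1 q := by
      simp only [Finset.mem_Icc]
      exact ⟨by omega, by have := j.isLt; omega⟩
    rw [← himc] at hi
    rw [← himc'] at hj
    obtain ⟨u, -, hu⟩ := Finset.mem_image.1 hi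
    obtain ⟨v, -, hv⟩ := Finset.mem_image.1 hj
    refine ⟨(u, v), ?_⟩
    rw [key _ (u, v) rfl]
    congr 1
    exact Prod.ext (Fin.ext (show firstFit G σ u - 1 = (i : ℕ) by omega))
      (Fin.ext (show firstFit H σ' v - 1 = (j : ℕ) by omega))
end

section
/- Let n be a positive integer and consider K_n□K_n with vertex set {0,…,n−1}×{0,…,n−1} ordered lexicographically. Then the First-Fit coloring of (K_n□K_n, lex) assigns to each vertex (i,j) the color (i XOR j) + 1, where XOR denotes bitwise exclusive-or of the binary representations of i and j. -/
open SimpleGraph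

/-! A positive coloring in which each vertex avoids the colors of its earlier neighbours and
sees every smaller positive color on one of them is the First-Fit coloring. In lexicographic
order the earlier neighbours of `(i, j)` are the `(i', j)` with `i' < i` and the `(i, j')` with
`j' < j`, so `(i, j) ↦ (i XOR j) + 1` is such a coloring: XOR is injective in each argument, and
`x < i XOR j` forces `x XOR j < i` or `x XOR i < j` (the Nim-sum fact of Sprague–Grundy). -/

section FirstFit

variable {V : Type*} (G : SimpleGraph V) (ord : V → ℕ)

theorem firstFit_eq_sInf (v : V) :
    firstFit G ord v =
      sInf {c | 1 ≤ c ∧ ∀ u, ord u < ord v → G.Adj u v → firstFit G ord u ≠ c} := by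
  rw [firstFit, WellFounded.fix_eq]

def IsGreedyColoring (C : V → ℕ) : Prop :=
  ∀ v, 1 ≤ C v ∧ (∀ u, ord u < ord v → G.Adj u v → C u ≠ C v) ∧
    ∀ c, 1 ≤ c → c < C v → ∃ u, ord u < ord v ∧ G.Adj u v ∧ C u = c

theorem firstFit_eq_of_isGreedyColoring {C : V → ℕ} (hC : IsGreedyColoring G ord C) :
    firstFit G ord = C := by
  funext v
  induction v using (measure ord).wf.induction with
  | _ v ih =>
  obtain ⟨hpos, hproper, hmex⟩ := hC v
  have hmem : C v ∈ {c | 1 ≤ c ∧ ∀ u, ord u < ord v → G.Adj u v → firstFit G ord u ≠ c} :=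
    ⟨hpos, fun u hu hadj => ih u hu ▸ hproper u hu hadj⟩
  rw [firstFit_eq_sInf]
  refine le_antisymm (Nat.sInf_le hmem) (le_csInf ⟨_, hmem⟩ fun c ⟨hc, hfree⟩ => ?_)
  by_contra! hlt
  obtain ⟨u, hu, hadj, rfl⟩ := hmex c hc hlt
  exact hfree u hu hadj (ih u hu)

end FirstFit

theorem lexPos_lt_lexPos_iff {V W : Type*} [Fintype W] (σ : V → ℕ) (σ' : W → ℕ) (p q : V × W) :
    lexPos σ σ' p < lexPos σ σ' q ↔ σ p.1 < σ q.1 ∨ σ p.1 = σ q.1 ∧ σ' p.2 < σ' q.2 := by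
  have hp : σ' p.2 ≤ Finset.univ.sup σ' := Finset.le_sup (Finset.mem_univ _)
  have hq : σ' q.2 ≤ Finset.univ.sup σ' := Finset.le_sup (Finset.mem_univ _)
  unfold lexPos
  generalize Finset.univ.sup σ' = B at hp hq
  constructor
  · intro h
    rcases lt_trichotomy (σ p.1) (σ q.1) with hlt | heq | hgt
    · exact Or.inl hlt
    · rw [heq] at h
      exact Or.inr ⟨heq, by omega⟩
    · nlinarith
  · rintro (hlt | ⟨heq, hlt⟩)
    · nlinarith
    · rw [heq]; omega

theorem boxProd_top_adj_and_lexPos_lt_iff {m n : ℕ} (u p : Fin m × Fin n) :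
    ((⊤ : SimpleGraph (Fin m)).boxProd (⊤ : SimpleGraph (Fin n))).Adj u p ∧
        lexPos Fin.val Fin.val u < lexPos Fin.val Fin.val p ↔
      u.2 = p.2 ∧ u.1 < p.1 ∨ u.1 = p.1 ∧ u.2 < p.2 := by
  simp only [boxProd_adj, top_adj, lexPos_lt_lexPos_iff, Fin.val_inj, Fin.lt_def]
  omega

theorem isGreedyColoring_boxProd_top_lex_xor (m n : ℕ) :
    IsGreedyColoring ((⊤ : SimpleGraph (Fin m)).boxProd (⊤ : SimpleGraph (Fin n)))
      (lexPos Fin.val Fin.val) (fun p => (p.1.val ^^^ p.2.val) + 1) := by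
  rintro ⟨i, j⟩
  refine ⟨Nat.le_add_left 1 _, fun u hu hadj => ?_, fun c hc hlt => ?_⟩
  · rcases (boxProd_top_adj_and_lexPos_lt_iff u (i, j)).1 ⟨hadj, hu⟩ with ⟨h2, h1⟩ | ⟨h1, h2⟩
    · simp only [h2, ne_eq, add_left_inj, Nat.xor_left_inj, Fin.val_inj]
      exact h1.ne
    · simp only [h1, ne_eq, add_left_inj, Nat.xor_right_inj, Fin.val_inj]
      exact h2.ne
  · obtain ⟨x, rfl⟩ := Nat.exists_eq_add_of_le' hc
    rcases Nat.lt_xor_cases (Nat.lt_of_add_lt_add_right hlt) with h | h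
    · let u : Fin m × Fin n := (⟨x ^^^ j, h.trans i.isLt⟩, j)
      obtain ⟨hadj, hu⟩ := (boxProd_top_adj_and_lexPos_lt_iff u (i, j)).2 (Or.inl ⟨rfl, h⟩)
      exact ⟨u, hu, hadj, by simp [u]⟩
    · let u : Fin m × Fin n := (i, ⟨x ^^^ i, h.trans j.isLt⟩)
      obtain ⟨hadj, hu⟩ := (boxProd_top_adj_and_lexPos_lt_iff u (i, j)).2 (Or.inr ⟨rfl, h⟩)
      exact ⟨u, hu, hadj, by simp [u, Nat.xor_comm x]⟩

theorem firstFit_boxProd_top_lex (m n : ℕ) :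
    firstFit ((⊤ : SimpleGraph (Fin m)).boxProd (⊤ : SimpleGraph (Fin n)))
      (lexPos Fin.val Fin.val) = fun p => (p.1.val ^^^ p.2.val) + 1 :=
  firstFit_eq_of_isGreedyColoring _ _ (isGreedyColoring_boxProd_top_lex_xor m n)

theorem firstFit_complete_boxProd_self_lex_general (n : ℕ) :
    firstFit ((⊤ : SimpleGraph (Fin n)).boxProd (⊤ : SimpleGraph (Fin n)))
      (lexPos Fin.val Fin.val) = fun p => (p.1.val ^^^ p.2.val) + 1 :=
  firstFit_boxProd_top_lex n n

/-- The First-Fit coloring of `(K_n □ K_n, lex)` assigns to the vertex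
`(i, j)` the color `(i XOR j) + 1`. -/
theorem firstFit_complete_boxProd_self_lex (n : ℕ) (hn : 0 < n) :
    firstFit ((⊤ : SimpleGraph (Fin n)).boxProd (⊤ : SimpleGraph (Fin n)))
      (lexPos Fin.val Fin.val) = fun p => (p.1.val ^^^ p.2.val) + 1 :=
  firstFit_complete_boxProd_self_lex_general n
end
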